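/- arXiv:1912.00764 — 2 statements merged into one kernel-verified Lean document; each statement's English description precedes it below -/
import Mathlib

section
/- For a random variable $y^*$ that is a mixture over a discrete state $s^*$ where conditional on each state the distribution has dispersion (variance over squared mean) at least $d_0 > 1$, and the conditional means are not all equal, the unconditional dispersion of $y^*$ is strictly greater than $d_0$; in particular, if each component is over-dispersed then the mixture is over-dispersed. -/
/-!
By the law of total variance, `Var y = ∑ₖ pₖ Varₖ y + (∑ₖ pₖ mₖ² - M²)`, where `mₖ` are the
conditional means and `M = ∑ₖ pₖ mₖ`. The bracket is positive by strict Jensen for `x ↦ x²`,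
since the `mₖ` are not all equal, and each `Varₖ y ≥ d0 mₖ²`. Hence
`Var y > d0 ∑ₖ pₖ mₖ² > d0 M²`.
-/

open MeasureTheory ProbabilityTheory Finset

section Conditioning

variable {Ω E : Type*} [MeasurableSpace Ω] [NormedAddCommGroup E] {μ : Measure Ω} {s : Set Ω}

lemma MeasureTheory.MemLp.cond {p : ENNReal} {f : Ω → E} (hf : MemLp f p μ) :
    MemLp f p μ[|s] := by
  by_cases hs : μ s = 0
  · rw [cond_eq_zero_of_meas_eq_zero hs]
    exact memLp_measure_zero
  · exact (hf.restrict s).smul_measure (ENNReal.inv_ne_top.2 hs)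

lemma MeasureTheory.Integrable.cond {f : Ω → E} (hf : Integrable f μ) : Integrable f μ[|s] :=
  memLp_one_iff_integrable.1 (memLp_one_iff_integrable.2 hf).cond

variable {α : Type*} [Fintype α] [MeasurableSpace α] [DiscreteMeasurableSpace α] {X : Ω → α}

theorem integral_eq_sum_measureReal_smul_integral_cond [NormedSpace ℝ E] [IsFiniteMeasure μ]
    (hX : Measurable X) {f : Ω → E} (hf : Integrable f μ) :
    ∫ ω, f ω ∂μ = ∑ x, μ.real (X ⁻¹' {x}) • ∫ ω, f ω ∂μ[|X ← x] := by
  conv_lhs => rw [← sum_meas_smul_cond_fiber hX μ]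
  rw [integral_finsetSum_measure fun x _ => hf.cond.smul_measure (measure_ne_top _ _)]
  simp only [integral_smul_measure, measureReal_def]

/-- The law of total variance; the bracket is the variance of the conditional means. -/
theorem variance_eq_sum_measureReal_mul_variance_cond_add [IsProbabilityMeasure μ]
    (hX : Measurable X) {Y : Ω → ℝ} (hY : MemLp Y 2 μ) :
    variance Y μ = ∑ x, μ.real (X ⁻¹' {x}) * variance Y μ[|X ← x] +
      (∑ x, μ.real (X ⁻¹' {x}) * (∫ ω, Y ω ∂μ[|X ← x]) ^ 2 - (∫ ω, Y ω ∂μ) ^ 2) := by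
  have hfibre : ∀ x, μ.real (X ⁻¹' {x}) * ∫ ω, Y ω ^ 2 ∂μ[|X ← x] =
      μ.real (X ⁻¹' {x}) * variance Y μ[|X ← x] +
        μ.real (X ⁻¹' {x}) * (∫ ω, Y ω ∂μ[|X ← x]) ^ 2 := by
    intro x
    by_cases hx : μ (X ⁻¹' {x}) = 0
    · simp [measureReal_def, hx]
    · have := cond_isProbabilityMeasure (μ := μ) hx
      rw [variance_eq_sub hY.cond]
      simp only [Pi.pow_apply]
      ring
  rw [variance_eq_sub hY]
  simp only [Pi.pow_apply]
  rw [integral_eq_sum_measureReal_smul_integral_cond hX hY.integrable_sq]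
  simp only [smul_eq_mul, hfibre, sum_add_distrib]
  ring

end Conditioning

lemma sq_sum_mul_lt_sum_mul_sq {ι : Type*} {t : Finset ι} {w m : ι → ℝ}
    (hw : ∀ i ∈ t, 0 ≤ w i) (hw₁ : ∑ i ∈ t, w i = 1)
    (hm : ∃ j ∈ t, ∃ k ∈ t, w j ≠ 0 ∧ w k ≠ 0 ∧ m j ≠ m k) :
    (∑ i ∈ t, w i * m i) ^ 2 < ∑ i ∈ t, w i * m i ^ 2 :=
  ((Even.strictConvexOn_pow even_two two_ne_zero).map_sum_lt_iff_of_nonneg hw hw₁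
    fun _ _ => Set.mem_univ _).2 hm

/-- if each component of a mixture over a discrete state has
dispersion at least `d0 > 1` and the conditional means are not all equal, the
mixture's dispersion is strictly greater than `d0`; in particular the mixture is
over-dispersed. -/
theorem stmt_1 {Ω S : Type*} [MeasureSpace Ω] [IsProbabilityMeasure (ℙ : Measure Ω)]
    [Fintype S] [MeasurableSpace S] [MeasurableSingletonClass S]
    (s : Ω → S) (y : Ω → ℝ) (hs : Measurable s) (hy : MemLp y 2 ℙ)
    (d0 : ℝ) (hd0 : 1 < d0)
    (hdisp : ∀ k : S, 0 < ℙ (s ⁻¹' {k}) →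
      d0 ≤ variance y (ℙ[|s ⁻¹' {k}]) / (∫ ω, y ω ∂(ℙ[|s ⁻¹' {k}])) ^ 2)
    (hne : ∃ j k : S, 0 < ℙ (s ⁻¹' {j}) ∧ 0 < ℙ (s ⁻¹' {k}) ∧
      (∫ ω, y ω ∂(ℙ[|s ⁻¹' {j}])) ≠ ∫ ω, y ω ∂(ℙ[|s ⁻¹' {k}]))
    (hmean : 0 < ∫ ω, y ω ∂ℙ) :
    d0 < variance y ℙ / (∫ ω, y ω ∂ℙ) ^ 2 ∧
      1 < variance y ℙ / (∫ ω, y ω ∂ℙ) ^ 2 := by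
  set p : S → ℝ := fun k => (ℙ : Measure Ω).real (s ⁻¹' {k})
  set m : S → ℝ := fun k => ∫ ω, y ω ∂ℙ[|s ⁻¹' {k}]
  have hp_ne : ∀ k, p k ≠ 0 ↔ 0 < ℙ (s ⁻¹' {k}) := fun k =>
    (measureReal_ne_zero_iff).trans pos_iff_ne_zero.symm
  have hp_sum : ∑ k, p k = 1 := by
    rw [sum_measureReal_preimage_singleton _ fun k _ => hs (measurableSet_singleton k)]
    simp
  have hmean_eq : ∫ ω, y ω ∂ℙ = ∑ k, p k * m k :=
    integral_eq_sum_measureReal_smul_integral_cond hs (hy.integrable one_le_two)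
  have hjensen : (∫ ω, y ω ∂ℙ) ^ 2 < ∑ k, p k * m k ^ 2 := by
    obtain ⟨j, k, hj, hk, hjk⟩ := hne
    rw [hmean_eq]
    exact sq_sum_mul_lt_sum_mul_sq (fun _ _ => measureReal_nonneg) hp_sum
      ⟨j, mem_univ _, k, mem_univ _, (hp_ne j).2 hj, (hp_ne k).2 hk, hjk⟩
  have hcomponents : d0 * ∑ k, p k * m k ^ 2 ≤ ∑ k, p k * variance y ℙ[|s ⁻¹' {k}] := by
    rw [mul_sum]
    refine sum_le_sum fun k _ => ?_
    by_cases hk : p k = 0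
    · simp [hk]
    · rw [mul_left_comm]
      exact mul_le_mul_of_nonneg_left (mul_le_of_le_div₀ (variance_nonneg _ _) (sq_nonneg _)
        (hdisp k ((hp_ne k).1 hk))) measureReal_nonneg
  have hvar : d0 * (∫ ω, y ω ∂ℙ) ^ 2 < variance y ℙ := by
    have := mul_lt_mul_of_pos_left hjensen (zero_lt_one.trans hd0)
    rw [variance_eq_sum_measureReal_mul_variance_cond_add hs hy]
    linarith
  have hdisp_lt : d0 < variance y ℙ / (∫ ω, y ω ∂ℙ) ^ 2 := (lt_div_iff₀ (by positivity)).2 hvar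
  exact ⟨hdisp_lt, hd0.trans hdisp_lt⟩
end

section
/- (Bimodality criterion for mixtures, Došlá) Let $f_1, f_2$ be unimodal differentiable densities with modes $M_1 < M_2$, let $\phi(y) = |f_1'(y)/f_2'(y)|$ be continuous on $(M_1, M_2)$ with $\lim_{y\to M_1^+}\phi = 0$ and $\lim_{y\to M_2^-}\phi = \infty$, and suppose there exist $x_1 < x_2$ in $(M_1,M_2)$ such that $\phi$ is increasing on $(M_1,x_1)$, decreasing on $(x_1,x_2)$, and increasing on $(x_2,M_2)$. Then the mixture $g = p f_1 + (1-p) f_2$, $p\in(0,1)$, is bimodal if and only if $p \in (p_1, p_2)$ where $1/p_i = 1 + \phi(x_i)$ for $i = 1, 2$. -/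
/-!
On `(M₁, M₂)` we have `f₁' ≤ 0 ≤ f₂'`, so wherever `φ > 0` the derivative of
`g = p f₁ + (1 - p) f₂` has the sign of `r - φ`, where `r = (1 - p) / p`; outside
`[M₁, M₂]`, `g` increases up to `M₁` and decreases from `M₂` on. The graph of `φ` rises
from `0` to `φ x₁`, falls to `φ x₂` and rises to `∞`, so the level `r` is crossed three
times when `φ x₂ < r < φ x₁`, giving two maxima separated by a minimum, and only once
otherwise, giving a single mode. Finally `p₁ < p < p₂` is exactly `φ x₂ < r < φ x₁`.
-/

/-- A density is bimodal if it has exactly two local maxima. -/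
def Bimodal (g : ℝ → ℝ) : Prop :=
  ∃ x₁ x₂ : ℝ, x₁ < x₂ ∧ IsLocalMax g x₁ ∧ IsLocalMax g x₂ ∧
    ∀ x : ℝ, IsLocalMax g x → x = x₁ ∨ x = x₂

open Set Filter Topology

section Order

variable {α β : Type*} [LinearOrder α] [Preorder β] {f : α → β} {a b c : α}

theorem StrictMonoOn.Iic_union_Icc (h₁ : StrictMonoOn f (Iic a)) (h₂ : StrictMonoOn f (Icc a b))
    (hab : a ≤ b) : StrictMonoOn f (Iic b) := by
  simpa [Iic_union_Icc_eq_Iic hab] using h₁.union h₂ isGreatest_Iic (isLeast_Icc hab)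

theorem StrictMonoOn.Icc_union_Icc (h₁ : StrictMonoOn f (Icc a b))
    (h₂ : StrictMonoOn f (Icc b c)) (hab : a ≤ b) (hbc : b ≤ c) : StrictMonoOn f (Icc a c) := by
  simpa [Icc_union_Icc_eq_Icc hab hbc] using h₁.union h₂ (isGreatest_Icc hab) (isLeast_Icc hbc)

theorem StrictAntiOn.Icc_union_Ici (h₁ : StrictAntiOn f (Icc a b)) (h₂ : StrictAntiOn f (Ici b))
    (hab : a ≤ b) : StrictAntiOn f (Ici a) := by
  simpa [Icc_union_Ici_eq_Ici hab] using h₁.union h₂ (isGreatest_Icc hab) isLeast_Ici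

variable [TopologicalSpace α] [OrderTopology α] [DenselyOrdered α]

theorem StrictMonoOn.not_isLocalMax (hf : StrictMonoOn f (Icc a b)) (hab : a < b) :
    ¬ IsLocalMax f a := fun hmax => by
  have := nhdsGT_neBot_of_exists_gt ⟨b, hab⟩
  have hle : ∀ᶠ y in 𝓝[>] a, f y ≤ f a := nhdsWithin_le_nhds hmax
  obtain ⟨y, hfy, hy⟩ := (hle.and (Ioo_mem_nhdsGT hab)).exists
  exact (hf (left_mem_Icc.2 hab.le) (Ioo_subset_Icc_self hy) hy.1).not_ge hfy

theorem StrictAntiOn.not_isLocalMax (hf : StrictAntiOn f (Icc a b)) (hab : a < b) :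
    ¬ IsLocalMax f b := fun hmax => by
  have := nhdsLT_neBot_of_exists_lt ⟨a, hab⟩
  have hle : ∀ᶠ y in 𝓝[<] b, f y ≤ f b := nhdsWithin_le_nhds hmax
  obtain ⟨y, hfy, hy⟩ := (hle.and (Ioo_mem_nhdsLT hab)).exists
  exact (hf (Ioo_subset_Icc_self hy) (right_mem_Icc.2 hab.le) hy.2).not_ge hfy

theorem StrictMonoOn.Icc_of_Ioo [TopologicalSpace β] [OrderClosedTopology β]
    (hf : StrictMonoOn f (Ioo a b)) (hc : ContinuousOn f (Icc a b)) :
    StrictMonoOn f (Icc a b) := by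
  intro x hx y hy hxy
  obtain ⟨u, hxu, huy⟩ := exists_between hxy
  obtain ⟨v, huv, hvy⟩ := exists_between huy
  have hu : u ∈ Ioo a b := ⟨hx.1.trans_lt hxu, huy.trans_le hy.2⟩
  have hv : v ∈ Ioo a b := ⟨hx.1.trans_lt (hxu.trans huv), hvy.trans_le hy.2⟩
  have hfxu : f x ≤ f u := by
    have := left_nhdsWithin_Ioo_neBot hxu
    have hxu' : Ioo x u ⊆ Ioo a b := Ioo_subset_Ioo hx.1 hu.2.le
    exact le_of_tendsto ((hc x hx).mono (hxu'.trans Ioo_subset_Icc_self))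
      (eventually_mem_nhdsWithin.mono fun w hw => (hf (hxu' hw) hu hw.2).le)
  have hfvy : f v ≤ f y := by
    have := right_nhdsWithin_Ioo_neBot hvy
    have hvy' : Ioo v y ⊆ Ioo a b := Ioo_subset_Ioo hv.1.le hy.2
    exact ge_of_tendsto ((hc y hy).mono (hvy'.trans Ioo_subset_Icc_self))
      (eventually_mem_nhdsWithin.mono fun w hw => (hf hv (hvy' hw) hw.1).le)
  exact hfxu.trans_lt ((hf hu hv huv).trans_le hfvy)

theorem StrictAntiOn.Icc_of_Ioo [TopologicalSpace β] [OrderClosedTopology β]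
    (hf : StrictAntiOn f (Ioo a b)) (hc : ContinuousOn f (Icc a b)) :
    StrictAntiOn f (Icc a b) :=
  StrictMonoOn.Icc_of_Ioo (β := βᵒᵈ) hf hc

end Order

section Bimodal

variable {g : ℝ → ℝ}

theorem bimodal_of_strictMonoOn_of_strictAntiOn {a b c : ℝ} (hab : a < b) (hbc : b < c)
    (h₁ : StrictMonoOn g (Iic a)) (h₂ : StrictAntiOn g (Icc a b)) (h₃ : StrictMonoOn g (Icc b c))
    (h₄ : StrictAntiOn g (Ici c)) : Bimodal g := by
  refine ⟨a, c, hab.trans hbc,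
    isLocalMax_of_mono_anti' self_mem_nhdsWithin (Icc_mem_nhdsGE hab) h₁.monotoneOn
      h₂.antitoneOn,
    isLocalMax_of_mono_anti' (Icc_mem_nhdsLE hbc) self_mem_nhdsWithin h₃.monotoneOn
      h₄.antitoneOn,
    fun x hx => ?_⟩
  rcases lt_trichotomy x a with hxa | rfl | hax
  · exact absurd hx ((h₁.mono Icc_subset_Iic_self).not_isLocalMax hxa)
  · exact .inl rfl
  rcases le_or_gt x b with hxb | hbx
  · exact absurd hx ((h₂.mono (Icc_subset_Icc_right hxb)).not_isLocalMax hax)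
  rcases lt_trichotomy x c with hxc | rfl | hcx
  · exact absurd hx ((h₃.mono (Icc_subset_Icc_left hbx.le)).not_isLocalMax hxc)
  · exact .inr rfl
  · exact absurd hx ((h₄.mono Icc_subset_Ici_self).not_isLocalMax hcx)

theorem not_bimodal_of_strictMonoOn_Iic_of_strictAntiOn_Ici {m : ℝ}
    (h₁ : StrictMonoOn g (Iic m)) (h₂ : StrictAntiOn g (Ici m)) : ¬ Bimodal g := by
  have hmax : ∀ x, IsLocalMax g x → x = m := fun x hx => by
    by_contra hne
    rcases lt_or_gt_of_ne hne with hxm | hmx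
    · exact (h₁.mono Icc_subset_Iic_self).not_isLocalMax hxm hx
    · exact (h₂.mono Icc_subset_Ici_self).not_isLocalMax hmx hx
  rintro ⟨u, v, huv, hu, hv, -⟩
  exact huv.ne ((hmax u hu).trans (hmax v hv).symm)

end Bimodal

structure IsZigzag (φ : ℝ → ℝ) (M₁ x₁ x₂ M₂ : ℝ) : Prop where
  left_lt : M₁ < x₁
  lt : x₁ < x₂
  lt_right : x₂ < M₂
  nonneg : ∀ y ∈ Ioo M₁ M₂, 0 ≤ φ y
  continuousOn : ContinuousOn φ (Ioo M₁ M₂)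
  tendsto_left : Tendsto φ (𝓝[Ioo M₁ M₂] M₁) (𝓝 0)
  tendsto_right : Tendsto φ (𝓝[Ioo M₁ M₂] M₂) atTop
  strictMonoOn_left : StrictMonoOn φ (Ioo M₁ x₁)
  strictAntiOn : StrictAntiOn φ (Ioo x₁ x₂)
  strictMonoOn_right : StrictMonoOn φ (Ioo x₂ M₂)

namespace IsZigzag

variable {φ : ℝ → ℝ} {M₁ x₁ x₂ M₂ r y : ℝ}

theorem continuousOn_Icc (hφ : IsZigzag φ M₁ x₁ x₂ M₂) {u v : ℝ} (hu : M₁ < u)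
    (hv : v < M₂) : ContinuousOn φ (Icc u v) :=
  hφ.continuousOn.mono (Icc_subset_Ioo hu hv)

theorem strictMonoOn_Ioc (hφ : IsZigzag φ M₁ x₁ x₂ M₂) :
    StrictMonoOn φ (Ioc M₁ x₁) := by
  intro u hu v hv huv
  have h : StrictMonoOn φ (Icc u x₁) :=
    (hφ.strictMonoOn_left.mono (Ioo_subset_Ioo_left hu.1.le)).Icc_of_Ioo
      (hφ.continuousOn_Icc hu.1 (hφ.lt.trans hφ.lt_right))
  exact h ⟨le_rfl, hu.2⟩ ⟨huv.le, hv.2⟩ huv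

theorem strictAntiOn_Icc (hφ : IsZigzag φ M₁ x₁ x₂ M₂) :
    StrictAntiOn φ (Icc x₁ x₂) :=
  hφ.strictAntiOn.Icc_of_Ioo (hφ.continuousOn_Icc hφ.left_lt hφ.lt_right)

theorem strictMonoOn_Ico (hφ : IsZigzag φ M₁ x₁ x₂ M₂) :
    StrictMonoOn φ (Ico x₂ M₂) := by
  intro u hu v hv huv
  have h : StrictMonoOn φ (Icc x₂ v) :=
    (hφ.strictMonoOn_right.mono (Ioo_subset_Ioo_right hv.2.le)).Icc_of_Ioo
      (hφ.continuousOn_Icc (hφ.left_lt.trans hφ.lt) hv.2)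
  exact h ⟨hu.1, huv.le⟩ ⟨hv.1, le_rfl⟩ huv

theorem nonneg_x₂ (hφ : IsZigzag φ M₁ x₁ x₂ M₂) : 0 ≤ φ x₂ :=
  hφ.nonneg x₂ ⟨hφ.left_lt.trans hφ.lt, hφ.lt_right⟩

theorem pos_of_mem_Ioo_left (hφ : IsZigzag φ M₁ x₁ x₂ M₂) (hy : y ∈ Ioo M₁ x₂) :
    0 < φ y := by
  rcases le_or_gt y x₁ with hyx₁ | hx₁y
  · obtain ⟨z, hM₁z, hzy⟩ := exists_between hy.1
    exact (hφ.nonneg z ⟨hM₁z, hzy.trans (hy.2.trans hφ.lt_right)⟩).trans_lt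
      (hφ.strictMonoOn_Ioc ⟨hM₁z, hzy.le.trans hyx₁⟩ ⟨hy.1, hyx₁⟩ hzy)
  · exact hφ.nonneg_x₂.trans_lt
      (hφ.strictAntiOn_Icc ⟨hx₁y.le, hy.2.le⟩ ⟨hφ.lt.le, le_rfl⟩ hy.2)

theorem pos_of_mem_Ioo_right (hφ : IsZigzag φ M₁ x₁ x₂ M₂) (hy : y ∈ Ioo x₂ M₂) :
    0 < φ y :=
  hφ.nonneg_x₂.trans_lt (hφ.strictMonoOn_Ico ⟨le_rfl, hφ.lt_right⟩ ⟨hy.1.le, hy.2⟩ hy.1)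

theorem min_lt_of_mem_Ioo (hφ : IsZigzag φ M₁ x₁ x₂ M₂) {a b : ℝ} (ha : a ∈ Ioc M₁ x₁)
    (hb : b ∈ Icc x₁ x₂) (hy : y ∈ Ioo a b) : min (φ a) (φ b) < φ y := by
  rcases le_total y x₁ with hyx₁ | hx₁y
  · exact (min_le_left _ _).trans_lt
      (hφ.strictMonoOn_Ioc ha ⟨ha.1.trans hy.1, hyx₁⟩ hy.1)
  · exact (min_le_right _ _).trans_lt
      (hφ.strictAntiOn_Icc ⟨hx₁y, hy.2.le.trans hb.2⟩ hb hy.2)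

theorem exists_left_crossing (hφ : IsZigzag φ M₁ x₁ x₂ M₂) (hr : 0 < r) (h : r < φ x₁) :
    ∃ a ∈ Ioo M₁ x₁, φ a = r := by
  have hx₁M₂ : x₁ < M₂ := hφ.lt.trans hφ.lt_right
  have := left_nhdsWithin_Ioo_neBot (hφ.left_lt.trans hx₁M₂)
  obtain ⟨z, hzr, hz⟩ := ((hφ.tendsto_left.eventually (gt_mem_nhds hr)).and
    (inter_mem_nhdsWithin (Ioo M₁ M₂) (Iio_mem_nhds hφ.left_lt))).exists
  obtain ⟨a, ha, hφa⟩ :=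
    intermediate_value_Ioo hz.2.le (hφ.continuousOn_Icc hz.1.1 hx₁M₂) ⟨hzr, h⟩
  exact ⟨a, ⟨hz.1.1.trans ha.1, ha.2⟩, hφa⟩

theorem exists_middle_crossing (hφ : IsZigzag φ M₁ x₁ x₂ M₂) (h₂ : φ x₂ < r)
    (h₁ : r < φ x₁) : ∃ b ∈ Ioo x₁ x₂, φ b = r :=
  intermediate_value_Ioo' hφ.lt.le (hφ.continuousOn_Icc hφ.left_lt hφ.lt_right) ⟨h₂, h₁⟩

theorem exists_right_crossing (hφ : IsZigzag φ M₁ x₁ x₂ M₂) (h : φ x₂ < r) :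
    ∃ c ∈ Ioo x₂ M₂, φ c = r := by
  have hM₁x₂ : M₁ < x₂ := hφ.left_lt.trans hφ.lt
  have := right_nhdsWithin_Ioo_neBot (hM₁x₂.trans hφ.lt_right)
  obtain ⟨w, hwr, hw⟩ := ((hφ.tendsto_right.eventually (eventually_gt_atTop r)).and
    (inter_mem_nhdsWithin (Ioo M₁ M₂) (Ioi_mem_nhds hφ.lt_right))).exists
  obtain ⟨c, hc, hφc⟩ :=
    intermediate_value_Ioo hw.2.le (hφ.continuousOn_Icc hM₁x₂ hw.1.2) ⟨h, hwr⟩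
  exact ⟨c, ⟨hc.1, hc.2.trans hw.1.2⟩, hφc⟩

end IsZigzag

structure ThresholdShape (g φ : ℝ → ℝ) (r M₁ M₂ : ℝ) : Prop where
  continuous : Continuous g
  strictMonoOn_Iic : StrictMonoOn g (Iic M₁)
  strictAntiOn_Ici : StrictAntiOn g (Ici M₂)
  -- `0 < φ y` is needed since the ratio `φ = |f₁' / f₂'|` takes the junk value `0` at `f₂' = 0`.
  deriv_pos : ∀ y ∈ Ioo M₁ M₂, 0 < φ y → φ y < r → 0 < deriv g y
  deriv_neg : ∀ y ∈ Ioo M₁ M₂, r < φ y → deriv g y < 0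

namespace ThresholdShape

variable {g φ : ℝ → ℝ} {r M₁ x₁ x₂ M₂ u v : ℝ}

theorem strictMonoOn_Icc (hg : ThresholdShape g φ r M₁ M₂) (hu : M₁ ≤ u) (hv : v ≤ M₂)
    (h : ∀ y ∈ Ioo u v, 0 < φ y ∧ φ y < r) : StrictMonoOn g (Icc u v) :=
  strictMonoOn_of_deriv_pos (convex_Icc u v) hg.continuous.continuousOn fun y hy => by
    rw [interior_Icc] at hy
    exact hg.deriv_pos y ⟨hu.trans_lt hy.1, hy.2.trans_le hv⟩ (h y hy).1 (h y hy).2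

theorem strictAntiOn_Icc (hg : ThresholdShape g φ r M₁ M₂) (hu : M₁ ≤ u) (hv : v ≤ M₂)
    (h : ∀ y ∈ Ioo u v, r < φ y) : StrictAntiOn g (Icc u v) :=
  strictAntiOn_of_deriv_neg (convex_Icc u v) hg.continuous.continuousOn fun y hy => by
    rw [interior_Icc] at hy
    exact hg.deriv_neg y ⟨hu.trans_lt hy.1, hy.2.trans_le hv⟩ (h y hy)

theorem strictMonoOn_Iic_of_left_crossing (hg : ThresholdShape g φ r M₁ M₂)
    (hφ : IsZigzag φ M₁ x₁ x₂ M₂) {a : ℝ} (ha : a ∈ Ioo M₁ x₁) (hφa : φ a = r) :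
    StrictMonoOn g (Iic a) := by
  have hax₂ : a < x₂ := ha.2.trans hφ.lt
  refine hg.strictMonoOn_Iic.Iic_union_Icc (hg.strictMonoOn_Icc le_rfl
    (hax₂.trans hφ.lt_right).le fun y hy => ⟨?_, ?_⟩) ha.1.le
  · exact hφ.pos_of_mem_Ioo_left ⟨hy.1, hy.2.trans hax₂⟩
  · exact hφa ▸ hφ.strictMonoOn_Ioc ⟨hy.1, (hy.2.trans ha.2).le⟩ ⟨ha.1, ha.2.le⟩ hy.2

theorem strictMonoOn_strictAntiOn_of_right_crossing (hg : ThresholdShape g φ r M₁ M₂)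
    (hφ : IsZigzag φ M₁ x₁ x₂ M₂) {c : ℝ} (hc : c ∈ Ioo x₂ M₂) (hφc : φ c = r) :
    StrictMonoOn g (Icc x₂ c) ∧ StrictAntiOn g (Ici c) := by
  refine ⟨hg.strictMonoOn_Icc (hφ.left_lt.trans hφ.lt).le hc.2.le fun y hy => ⟨?_, ?_⟩,
    (hg.strictAntiOn_Icc (hφ.left_lt.trans (hφ.lt.trans hc.1)).le le_rfl fun y hy => ?_)
      |>.Icc_union_Ici hg.strictAntiOn_Ici hc.2.le⟩
  · exact hφ.pos_of_mem_Ioo_right ⟨hy.1, hy.2.trans hc.2⟩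
  · exact hφc ▸ hφ.strictMonoOn_Ico ⟨hy.1.le, hy.2.trans hc.2⟩ ⟨hc.1.le, hc.2⟩ hy.2
  · exact hφc ▸ hφ.strictMonoOn_Ico ⟨hc.1.le, hc.2⟩ ⟨(hc.1.trans hy.1).le, hy.2⟩ hy.1

theorem bimodal (hg : ThresholdShape g φ r M₁ M₂) (hφ : IsZigzag φ M₁ x₁ x₂ M₂)
    (h₂ : φ x₂ < r) (h₁ : r < φ x₁) : Bimodal g := by
  obtain ⟨a, ha, hφa⟩ := hφ.exists_left_crossing (hφ.nonneg_x₂.trans_lt h₂) h₁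
  obtain ⟨b, hb, hφb⟩ := hφ.exists_middle_crossing h₂ h₁
  obtain ⟨c, hc, hφc⟩ := hφ.exists_right_crossing h₂
  obtain ⟨hmono, hanti⟩ := hg.strictMonoOn_strictAntiOn_of_right_crossing hφ hc hφc
  have hM₁b : M₁ ≤ b := (hφ.left_lt.trans hb.1).le
  refine bimodal_of_strictMonoOn_of_strictAntiOn (ha.2.trans hb.1) (hb.2.trans hc.1)
    (hg.strictMonoOn_Iic_of_left_crossing hφ ha hφa)
    (hg.strictAntiOn_Icc ha.1.le (hb.2.trans hφ.lt_right).le fun y hy => ?_)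
    ((hg.strictMonoOn_Icc hM₁b hφ.lt_right.le fun y hy => ⟨?_, ?_⟩).Icc_union_Icc hmono
      hb.2.le hc.1.le) hanti
  · simpa [hφa, hφb] using hφ.min_lt_of_mem_Ioo ⟨ha.1, ha.2.le⟩ ⟨hb.1.le, hb.2.le⟩ hy
  · exact hφ.pos_of_mem_Ioo_left ⟨hM₁b.trans_lt hy.1, hy.2⟩
  · exact hφb ▸
      hφ.strictAntiOn_Icc ⟨hb.1.le, hb.2.le⟩ ⟨(hb.1.trans hy.1).le, hy.2.le⟩ hy.1

theorem not_bimodal_of_le (hg : ThresholdShape g φ r M₁ M₂) (hφ : IsZigzag φ M₁ x₁ x₂ M₂)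
    (hr : 0 < r) (h : r ≤ φ x₂) : ¬ Bimodal g := by
  have hφx₂ : φ x₂ < φ x₁ :=
    hφ.strictAntiOn_Icc ⟨le_rfl, hφ.lt.le⟩ ⟨hφ.lt.le, le_rfl⟩ hφ.lt
  obtain ⟨a, ha, hφa⟩ := hφ.exists_left_crossing hr (h.trans_lt hφx₂)
  have hanti : StrictAntiOn g (Icc a x₂) :=
    hg.strictAntiOn_Icc ha.1.le hφ.lt_right.le fun y hy =>
      (le_min hφa.ge h).trans_lt
        (hφ.min_lt_of_mem_Ioo ⟨ha.1, ha.2.le⟩ ⟨hφ.lt.le, le_rfl⟩ hy)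
  have hanti' : StrictAntiOn g (Icc x₂ M₂) :=
    hg.strictAntiOn_Icc (hφ.left_lt.trans hφ.lt).le le_rfl fun y hy =>
      h.trans_lt (hφ.strictMonoOn_Ico ⟨le_rfl, hφ.lt_right⟩ ⟨hy.1.le, hy.2⟩ hy.1)
  exact not_bimodal_of_strictMonoOn_Iic_of_strictAntiOn_Ici
    (hg.strictMonoOn_Iic_of_left_crossing hφ ha hφa)
    (hanti.Icc_union_Ici (hanti'.Icc_union_Ici hg.strictAntiOn_Ici hφ.lt_right.le)
      (ha.2.trans hφ.lt).le)

theorem not_bimodal_of_ge (hg : ThresholdShape g φ r M₁ M₂) (hφ : IsZigzag φ M₁ x₁ x₂ M₂)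
    (h : φ x₁ ≤ r) : ¬ Bimodal g := by
  have hφx₂ : φ x₂ < φ x₁ :=
    hφ.strictAntiOn_Icc ⟨le_rfl, hφ.lt.le⟩ ⟨hφ.lt.le, le_rfl⟩ hφ.lt
  obtain ⟨c, hc, hφc⟩ := hφ.exists_right_crossing (hφx₂.trans_le h)
  obtain ⟨hmono, hanti⟩ := hg.strictMonoOn_strictAntiOn_of_right_crossing hφ hc hφc
  have hmono₁ : StrictMonoOn g (Icc M₁ x₁) :=
    hg.strictMonoOn_Icc le_rfl (hφ.lt.trans hφ.lt_right).le fun y hy =>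
      ⟨hφ.pos_of_mem_Ioo_left ⟨hy.1, hy.2.trans hφ.lt⟩,
        (hφ.strictMonoOn_Ioc ⟨hy.1, hy.2.le⟩ ⟨hφ.left_lt, le_rfl⟩ hy.2).trans_le h⟩
  have hmono₂ : StrictMonoOn g (Icc x₁ x₂) :=
    hg.strictMonoOn_Icc hφ.left_lt.le hφ.lt_right.le fun y hy =>
      ⟨hφ.pos_of_mem_Ioo_left ⟨hφ.left_lt.trans hy.1, hy.2⟩,
        (hφ.strictAntiOn_Icc ⟨le_rfl, hφ.lt.le⟩ ⟨hy.1.le, hy.2.le⟩ hy.1).trans_le h⟩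
  exact not_bimodal_of_strictMonoOn_Iic_of_strictAntiOn_Ici
    (((hg.strictMonoOn_Iic.Iic_union_Icc hmono₁ hφ.left_lt.le).Iic_union_Icc hmono₂
      hφ.lt.le).Iic_union_Icc hmono hc.1.le) hanti

theorem bimodal_iff (hg : ThresholdShape g φ r M₁ M₂) (hφ : IsZigzag φ M₁ x₁ x₂ M₂)
    (hr : 0 < r) : Bimodal g ↔ r < φ x₁ ∧ φ x₂ < r := by
  by_cases h₁ : r < φ x₁
  · by_cases h₂ : φ x₂ < r
    · exact iff_of_true (hg.bimodal hφ h₂ h₁) ⟨h₁, h₂⟩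
    · exact iff_of_false (hg.not_bimodal_of_le hφ hr (not_lt.1 h₂)) fun h => h₂ h.2
  · exact iff_of_false (hg.not_bimodal_of_ge hφ (not_lt.1 h₁)) fun h => h₁ h.1

end ThresholdShape

section Mixture

theorem mix_pos_iff {a b p : ℝ} (ha : a < 0) (hb : 0 < b) (hp : 0 < p) :
    0 < p * a + (1 - p) * b ↔ |a / b| < (1 - p) / p := by
  rw [abs_div, abs_of_neg ha, abs_of_pos hb, div_lt_div_iff₀ hb hp]
  constructor <;> intro h <;> linarith

theorem mix_neg_iff {a b p : ℝ} (ha : a < 0) (hb : 0 < b) (hp : 0 < p) :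
    p * a + (1 - p) * b < 0 ↔ (1 - p) / p < |a / b| := by
  rw [abs_div, abs_of_neg ha, abs_of_pos hb, div_lt_div_iff₀ hp hb]
  constructor <;> intro h <;> linarith

theorem lt_iff_odds_lt {p q t : ℝ} (hp : 0 < p) (ht : 0 ≤ t) (hq : 1 / q = 1 + t) :
    q < p ↔ (1 - p) / p < t := by
  have hq0 : 0 < q := one_div_pos.1 (by rw [hq]; linarith)
  rw [← one_div_lt_one_div hp hq0, hq, sub_div, div_self hp.ne']
  constructor <;> intro h <;> linarith

theorem lt_iff_lt_odds {p q t : ℝ} (hp : 0 < p) (ht : 0 ≤ t) (hq : 1 / q = 1 + t) :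
    p < q ↔ t < (1 - p) / p := by
  have hq0 : 0 < q := one_div_pos.1 (by rw [hq]; linarith)
  rw [← one_div_lt_one_div hq0 hp, hq, sub_div, div_self hp.ne']
  constructor <;> intro h <;> linarith

variable {f₁ f₂ φ : ℝ → ℝ} {M₁ M₂ p : ℝ}

theorem thresholdShape_mixture (hM : M₁ ≤ M₂) (hd₁ : Differentiable ℝ f₁)
    (hd₂ : Differentiable ℝ f₂)
    (huni₁ : StrictMonoOn f₁ (Iic M₁) ∧ StrictAntiOn f₁ (Ici M₁))
    (huni₂ : StrictMonoOn f₂ (Iic M₂) ∧ StrictAntiOn f₂ (Ici M₂)) (hp : p ∈ Ioo 0 1)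
    (hφ : ∀ y ∈ Ioo M₁ M₂, φ y = |deriv f₁ y / deriv f₂ y|) :
    ThresholdShape (fun y => p * f₁ y + (1 - p) * f₂ y) φ ((1 - p) / p) M₁ M₂ := by
  obtain ⟨hp₀, hp₁⟩ := hp
  have hq₀ : 0 < 1 - p := sub_pos.2 hp₁
  have hderiv : ∀ y, deriv (fun y => p * f₁ y + (1 - p) * f₂ y) y =
      p * deriv f₁ y + (1 - p) * deriv f₂ y := fun y =>
    (((hd₁ y).hasDerivAt.const_mul p).add ((hd₂ y).hasDerivAt.const_mul (1 - p))).deriv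
  have hsigns : ∀ y ∈ Ioo M₁ M₂, 0 < φ y → deriv f₁ y < 0 ∧ 0 < deriv f₂ y := by
    intro y hy hφy
    have h₁ : deriv f₁ y ≤ 0 := (hd₁ y).hasDerivAt.hasDerivWithinAt.nonpos_of_antitoneOn
      (uniqueDiffWithinAt_Ici y).accPt (huni₁.2.antitoneOn.mono (Ici_subset_Ici.2 hy.1.le))
    have h₂ : 0 ≤ deriv f₂ y := (hd₂ y).hasDerivAt.hasDerivWithinAt.nonneg_of_monotoneOn
      (uniqueDiffWithinAt_Iic y).accPt (huni₂.1.monotoneOn.mono (Iic_subset_Iic.2 hy.2.le))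
    rw [hφ y hy, abs_pos, div_ne_zero_iff] at hφy
    exact ⟨h₁.lt_of_ne hφy.1, h₂.lt_of_ne' hφy.2⟩
  refine ⟨(hd₁.continuous.const_mul p).add (hd₂.continuous.const_mul (1 - p)),
    fun x hx y hy hxy => ?_, fun x hx y hy hxy => ?_,
    fun y hy hφy hlt => ?_, fun y hy hlt => ?_⟩
  · have h₂ := huni₂.1 (mem_Iic.2 (hx.trans hM)) (mem_Iic.2 (hy.trans hM)) hxy
    exact add_lt_add (mul_lt_mul_of_pos_left (huni₁.1 hx hy hxy) hp₀)
      (mul_lt_mul_of_pos_left h₂ hq₀)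
  · have h₁ := huni₁.2 (mem_Ici.2 (hM.trans hx)) (mem_Ici.2 (hM.trans hy)) hxy
    exact add_lt_add (mul_lt_mul_of_pos_left h₁ hp₀)
      (mul_lt_mul_of_pos_left (huni₂.2 hx hy hxy) hq₀)
  · obtain ⟨h₁, h₂⟩ := hsigns y hy hφy
    rwa [hderiv, mix_pos_iff h₁ h₂ hp₀, ← hφ y hy]
  · obtain ⟨h₁, h₂⟩ := hsigns y hy ((div_pos hq₀ hp₀).trans hlt)
    rwa [hderiv, mix_neg_iff h₁ h₂ hp₀, ← hφ y hy]

end Mixture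

/-- Došlá's bimodality criterion for two-component mixtures. -/
theorem stmt_7 (f₁ f₂ : ℝ → ℝ) (M₁ M₂ : ℝ) (hlt : M₁ < M₂)
    (hd₁ : Differentiable ℝ f₁) (hd₂ : Differentiable ℝ f₂)
    (huni₁ : StrictMonoOn f₁ (Set.Iic M₁) ∧ StrictAntiOn f₁ (Set.Ici M₁))
    (huni₂ : StrictMonoOn f₂ (Set.Iic M₂) ∧ StrictAntiOn f₂ (Set.Ici M₂))
    (φ : ℝ → ℝ) (hφ : ∀ y ∈ Set.Ioo M₁ M₂, φ y = |deriv f₁ y / deriv f₂ y|)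
    (hcont : ContinuousOn φ (Set.Ioo M₁ M₂))
    (h0 : Filter.Tendsto φ (nhdsWithin M₁ (Set.Ioo M₁ M₂)) (nhds 0))
    (hinfty : Filter.Tendsto φ (nhdsWithin M₂ (Set.Ioo M₁ M₂)) Filter.atTop)
    (x₁ x₂ : ℝ) (hx₁ : M₁ < x₁) (hx₁₂ : x₁ < x₂) (hx₂ : x₂ < M₂)
    (hmono₁ : StrictMonoOn φ (Set.Ioo M₁ x₁))
    (hanti : StrictAntiOn φ (Set.Ioo x₁ x₂))
    (hmono₂ : StrictMonoOn φ (Set.Ioo x₂ M₂))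
    (p p₁ p₂ : ℝ) (hp : p ∈ Set.Ioo (0 : ℝ) 1)
    (hp₁ : 1 / p₁ = 1 + φ x₁) (hp₂ : 1 / p₂ = 1 + φ x₂) :
    Bimodal (fun y => p * f₁ y + (1 - p) * f₂ y) ↔ p ∈ Set.Ioo p₁ p₂ := by
  have hzigzag : IsZigzag φ M₁ x₁ x₂ M₂ := ⟨hx₁, hx₁₂, hx₂,
    fun y hy => hφ y hy ▸ abs_nonneg _, hcont, h0, hinfty, hmono₁, hanti, hmono₂⟩
  have hshape := thresholdShape_mixture hlt.le hd₁ hd₂ huni₁ huni₂ hp hφ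
  rw [hshape.bimodal_iff hzigzag (div_pos (sub_pos.2 hp.2) hp.1), mem_Ioo,
    lt_iff_odds_lt hp.1 (hzigzag.nonneg x₁ ⟨hx₁, hx₁₂.trans hx₂⟩) hp₁,
    lt_iff_lt_odds hp.1 hzigzag.nonneg_x₂ hp₂]
end
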